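/- For every graph G, the queue-number is less than the track-number: qn(G) ≤ tn(G) − 1. -/

import Mathlib

open SimpleGraph

/-- A (proper) track layout of the graph `G` with `t` tracks.
`track v` is the track (colour class) of vertex `v`, and `pos v` gives the
position of `v` in the total order of its track. -/
structure TrackLayout (V : Type) (G : SimpleGraph V) (t : ℕ) where
  /-- the track containing each vertex -/
  track : V → Fin t
  /-- the position of each vertex within its track -/
  pos : V → ℕ
  /-- distinct vertices on a common track occupy distinct positions -/
  inj : ∀ v w : V, track v = track w → pos v = pos w → v = w
  /-- the tracks form a proper vertex colouring -/
  proper : ∀ v w : V, G.Adj v w → track v ≠ track w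
  /-- no X-crossing: there are no edges `vw` and `xy` with `v, x` on one track,
  `w, y` on another track, `v <ᵢ x` and `y <ⱼ w` -/
  noX : ∀ v w x y : V, G.Adj v w → G.Adj x y →
    track v = track x → track w = track y → track v ≠ track w →
    pos v < pos x → pos y < pos w → False
/-- The track-number of `G`: the minimum `t` such that `G` has a `t`-track layout. -/
noncomputable def trackNumber (V : Type) (G : SimpleGraph V) : ℕ :=
  sInf {t : ℕ | Nonempty (TrackLayout V G t)}
/-- A queue layout of `G` with `q` queues: a vertex-ordering (given by an injection
`ord : V → ℕ`) together with an assignment of the edges to queues `0, …, q-1`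
such that no two edges in a common queue are nested. -/
structure QueueLayout (V : Type) (G : SimpleGraph V) (q : ℕ) where
  /-- the vertex-ordering -/
  ord : V → ℕ
  ordInj : Function.Injective ord
  /-- the queue assigned to each edge -/
  queue : V → V → ℕ
  queueSymm : ∀ v w : V, queue v w = queue w v
  queueLt : ∀ v w : V, G.Adj v w → queue v w < q
  /-- no two edges in a common queue are nested -/
  noNested : ∀ v w x y : V, G.Adj v w → G.Adj x y → queue v w = queue x y →
    ord v < ord x → ord x < ord y → ord y < ord w → False
/-- The queue-number of `G`: the minimum number of queues in a queue layout of `G`. -/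
noncomputable def queueNumber (V : Type) (G : SimpleGraph V) : ℕ :=
  sInf {q : ℕ | Nonempty (QueueLayout V G q)}

/-!
Order the vertices track by track, each track in its own order, and put an edge between
tracks `i` and `j` into queue `|i - j| - 1`. If two nested edges `vw ⊐ xy` in this order
span the same distance, then, since `v, x, y, w` lie on weakly increasing tracks, `v, x`
share a track and so do `y, w`, with `v` before `x` and `y` before `w`: an X-crossing.
-/

namespace TrackLayout

variable {V : Type} {G : SimpleGraph V} {t : ℕ}

noncomputable def discrete [Fintype V] (G : SimpleGraph V) : TrackLayout V G (Fintype.card V) where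
  track := Fintype.equivFin V
  pos _ := 0
  inj _ _ h _ := (Fintype.equivFin V).injective h
  proper _ _ hvw h := G.ne_of_adj hvw ((Fintype.equivFin V).injective h)
  noX _ _ _ _ _ _ _ _ _ hvx _ := lt_irrefl _ hvx

lemma track_val_ne (L : TrackLayout V G t) {v w : V} (h : G.Adj v w) :
    (L.track v : ℕ) ≠ L.track w :=
  Fin.val_injective.ne (L.proper v w h)

section Rank

variable [Fintype V] (L : TrackLayout V G t)

def posBound : ℕ := Finset.univ.sup L.pos + 1

lemma pos_lt_posBound (v : V) : L.pos v < L.posBound :=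
  Nat.lt_succ_of_le (Finset.le_sup (Finset.mem_univ v))

/-- The vertex-ordering that lists the tracks one after another. -/
def rank (v : V) : ℕ := L.posBound * L.track v + L.pos v

lemma rank_div_posBound (v : V) : L.rank v / L.posBound = L.track v := by
  rw [rank, Nat.mul_add_div (Nat.zero_lt_of_lt (L.pos_lt_posBound v)),
    Nat.div_eq_of_lt (L.pos_lt_posBound v), add_zero]

lemma rank_injective : Function.Injective L.rank := by
  intro v w h
  have htrack : L.track v = L.track w :=
    Fin.val_injective (by rw [← L.rank_div_posBound, ← L.rank_div_posBound, h])
  refine L.inj v w htrack ?_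
  simpa only [rank, htrack, Nat.add_left_cancel_iff] using h

lemma track_le_of_rank_lt {v w : V} (h : L.rank v < L.rank w) :
    (L.track v : ℕ) ≤ L.track w := by
  rw [← L.rank_div_posBound, ← L.rank_div_posBound]
  exact Nat.div_le_div_right h.le

lemma pos_lt_of_rank_lt {v w : V} (h : L.rank v < L.rank w) (htrack : L.track v = L.track w) :
    L.pos v < L.pos w := by
  simpa only [rank, htrack, Nat.add_lt_add_iff_left] using h

lemma not_nested_of_dist_eq {v w x y : V} (hvw : G.Adj v w) (hxy : G.Adj x y)
    (hdist : Nat.dist (L.track v) (L.track w) = Nat.dist (L.track x) (L.track y))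
    (hvx : L.rank v < L.rank x) (hxy_rank : L.rank x < L.rank y) (hyw : L.rank y < L.rank w) :
    False := by
  have htrack_vx := L.track_le_of_rank_lt hvx
  have htrack_xy := L.track_le_of_rank_lt hxy_rank
  have htrack_yw := L.track_le_of_rank_lt hyw
  rw [Nat.dist_eq_sub_of_le (htrack_vx.trans (htrack_xy.trans htrack_yw)),
    Nat.dist_eq_sub_of_le htrack_xy] at hdist
  have hv_x : L.track v = L.track x := Fin.val_injective (by omega)
  have hy_w : L.track y = L.track w := Fin.val_injective (by omega)
  exact L.noX v w x y hvw hxy hv_x hy_w.symm (L.proper v w hvw)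
    (L.pos_lt_of_rank_lt hvx hv_x) (L.pos_lt_of_rank_lt hyw hy_w)

def toQueueLayout : QueueLayout V G (t - 1) where
  ord := L.rank
  ordInj := L.rank_injective
  queue v w := Nat.dist (L.track v) (L.track w) - 1
  queueSymm v w := by rw [Nat.dist_comm]
  queueLt v w hvw := by
    have := L.track_val_ne hvw
    have := (L.track v).isLt
    have := (L.track w).isLt
    unfold Nat.dist
    omega
  noNested v w x y hvw hxy hq := by
    -- both spans are positive, so cancelling the truncated `- 1` is sound
    have := L.track_val_ne hvw
    have := L.track_val_ne hxy
    refine L.not_nested_of_dist_eq hvw hxy ?_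
    unfold Nat.dist at hq ⊢
    omega

end Rank

end TrackLayout

lemma nonempty_trackLayout_trackNumber {V : Type} [Fintype V] (G : SimpleGraph V) :
    Nonempty (TrackLayout V G (trackNumber V G)) :=
  Nat.sInf_mem (s := {t | Nonempty (TrackLayout V G t)}) ⟨_, ⟨TrackLayout.discrete G⟩⟩

/-- For every graph `G`, the queue-number is less than the
track-number: `qn(G) ≤ tn(G) - 1`. -/
theorem queueNumber_le_trackNumber_sub_one {V : Type} [Fintype V]
    (G : SimpleGraph V) :
    queueNumber V G ≤ trackNumber V G - 1 := by
  obtain ⟨L⟩ := nonempty_trackLayout_trackNumber G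
  exact Nat.sInf_le ⟨L.toQueueLayout⟩
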